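/- The multi-sorted second-order arithmetic SA is interpretable in Ar + (AC!): the translation φ^∧ that erases sorts and renames each set variable x_i^{(k)} to x_{(k,i)} maps every theorem of SA to a theorem of Ar + (AC!); in particular, if SA ⊢ φ then Ar + (AC!) ⊢ φ^∧. -/

import Mathlib

namespace ArXiv150408062

/-! ### First-order arithmetic: numerical terms and arithmetical formulas -/

/-- Numerical terms, built from variables and the constants `0`, `1` by `+` and `·`. -/
inductive NTm where
  | var : ℕ → NTm
  | zero : NTm
  | one : NTm
  | add : NTm → NTm → NTm
  | mul : NTm → NTm → NTm
deriving DecidableEq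

namespace NTm

def fv : NTm → Finset ℕ
  | .var i => {i}
  | .zero => ∅
  | .one => ∅
  | .add t u => t.fv ∪ u.fv
  | .mul t u => t.fv ∪ u.fv

def maxVar : NTm → ℕ
  | .var i => i + 1
  | .zero => 0
  | .one => 0
  | .add t u => max t.maxVar u.maxVar
  | .mul t u => max t.maxVar u.maxVar

/-- Substitution of `u` for the variable `i`. -/
def subst (t : NTm) (i : ℕ) (u : NTm) : NTm :=
  match t with
  | .var j => if j = i then u else .var j
  | .zero => .zero
  | .one => .one
  | .add a b => .add (a.subst i u) (b.subst i u)
  | .mul a b => .mul (a.subst i u) (b.subst i u)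

/-- Simultaneous substitution `σ` in a term. -/
def msubT (σ : ℕ → NTm) : NTm → NTm
  | .var i => σ i
  | .zero => .zero
  | .one => .one
  | .add a b => .add (a.msubT σ) (b.msubT σ)
  | .mul a b => .mul (a.msubT σ) (b.msubT σ)

/-- Value of a term in the standard model under an evaluation of the variables. -/
def val (ρ : ℕ → ℕ) : NTm → ℕ
  | .var i => ρ i
  | .zero => 0
  | .one => 1
  | .add a b => a.val ρ + b.val ρ
  | .mul a b => a.val ρ * b.val ρ

/-- The numeral `n̄ = 1 + 1 + ⋯ + 1`. -/
def numN : ℕ → NTm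
  | 0 => .zero
  | n + 1 => .add (numN n) .one

end NTm

/-- Purely arithmetical formulas (the formulas of PA). -/
inductive AFm where
  | bot : AFm
  | eq : NTm → NTm → AFm
  | and : AFm → AFm → AFm
  | or : AFm → AFm → AFm
  | imp : AFm → AFm → AFm
  | all : ℕ → AFm → AFm
  | ex : ℕ → AFm → AFm
deriving DecidableEq

namespace AFm

def neg (φ : AFm) : AFm := φ.imp .bot
def iff (φ ψ : AFm) : AFm := (φ.imp ψ).and (ψ.imp φ)

def fv : AFm → Finset ℕ
  | .bot => ∅
  | .eq t u => t.fv ∪ u.fv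
  | .and φ ψ => φ.fv ∪ ψ.fv
  | .or φ ψ => φ.fv ∪ ψ.fv
  | .imp φ ψ => φ.fv ∪ ψ.fv
  | .all i φ => φ.fv.erase i
  | .ex i φ => φ.fv.erase i

/-- Capture-avoiding simultaneous substitution. -/
def msub (σ : ℕ → NTm) : AFm → AFm
  | .bot => .bot
  | .eq t u => .eq (t.msubT σ) (u.msubT σ)
  | .and φ ψ => .and (φ.msub σ) (ψ.msub σ)
  | .or φ ψ => .or (φ.msub σ) (ψ.msub σ)
  | .imp φ ψ => .imp (φ.msub σ) (ψ.msub σ)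
  | .all i φ =>
      let j := (φ.fv.erase i).sup (fun v => (σ v).maxVar)
      .all j (φ.msub (Function.update σ i (.var j)))
  | .ex i φ =>
      let j := (φ.fv.erase i).sup (fun v => (σ v).maxVar)
      .ex j (φ.msub (Function.update σ i (.var j)))

/-- Instantiation of the designated parameters `n₀, n₁, …` of a formula by a
list of terms. -/
def inst (α : AFm) (ts : List NTm) : AFm := α.msub (fun i => ts.getD i (.var i))

/-- Satisfaction in the standard model ℕ. -/
def sat (ρ : ℕ → ℕ) : AFm → Prop
  | .bot => False
  | .eq t u => t.val ρ = u.val ρ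
  | .and φ ψ => φ.sat ρ ∧ ψ.sat ρ
  | .or φ ψ => φ.sat ρ ∨ ψ.sat ρ
  | .imp φ ψ => φ.sat ρ → ψ.sat ρ
  | .all i φ => ∀ n : ℕ, φ.sat (Function.update ρ i n)
  | .ex i φ => ∃ n : ℕ, φ.sat (Function.update ρ i n)

end AFm

/-- The Peano axioms (with the parameters `n = n₀`, `m = n₁`). -/
inductive PeanoAx : AFm → Prop where
  | succ_ne_zero : PeanoAx ((AFm.eq (.add (.var 0) .one) .zero).neg)
  | succ_inj : PeanoAx ((AFm.eq (.add (.var 0) .one) (.add (.var 1) .one)).imp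
      (.eq (.var 0) (.var 1)))
  | add_zero : PeanoAx (.eq (.add (.var 0) .zero) (.var 0))
  | add_succ : PeanoAx (.eq (.add (.var 0) (.add (.var 1) .one))
      (.add (.add (.var 0) (.var 1)) .one))
  | mul_zero : PeanoAx (.eq (.mul (.var 0) .zero) .zero)
  | mul_succ : PeanoAx (.eq (.mul (.var 0) (.add (.var 1) .one))
      (.add (.mul (.var 0) (.var 1)) (.var 0)))

/-! ## The multi-sorted second-order arithmetic SA

The language of SA has variables over natural numbers and, for each sort
`k ≥ 1`, variables `x_i^{(k)}` over sets of natural numbers; constants `0, 1`,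
functional symbols `+`, `·`, and predicate symbols `=` and `∈_k (k = 1, 2, …)`. -/

/-- Formulas of SA.  `mem k t i` is `t ∈_k x_i^{(k)}`; `allS k i φ` and
`exS k i φ` quantify over the set variable `x_i^{(k)}` of sort `k`. -/
inductive SFm where
  | bot : SFm
  | eq : NTm → NTm → SFm
  | mem : ℕ → NTm → ℕ → SFm
  | and : SFm → SFm → SFm
  | or : SFm → SFm → SFm
  | imp : SFm → SFm → SFm
  | allN : ℕ → SFm → SFm
  | exN : ℕ → SFm → SFm
  | allS : ℕ → ℕ → SFm → SFm
  | exS : ℕ → ℕ → SFm → SFm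
deriving DecidableEq

/-- Embedding of arithmetical formulas into the language of SA. -/
def AFm.toS : AFm → SFm
  | .bot => .bot
  | .eq t u => .eq t u
  | .and φ ψ => .and φ.toS ψ.toS
  | .or φ ψ => .or φ.toS ψ.toS
  | .imp φ ψ => .imp φ.toS ψ.toS
  | .all i φ => .allN i φ.toS
  | .ex i φ => .exN i φ.toS

namespace SFm

def neg (φ : SFm) : SFm := φ.imp .bot
def iff (φ ψ : SFm) : SFm := (φ.imp ψ).and (ψ.imp φ)

/-- Free numerical variables. -/
def fvN : SFm → Finset ℕ
  | .bot => ∅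
  | .eq t u => t.fv ∪ u.fv
  | .mem _ t _ => t.fv
  | .and φ ψ => φ.fvN ∪ ψ.fvN
  | .or φ ψ => φ.fvN ∪ ψ.fvN
  | .imp φ ψ => φ.fvN ∪ ψ.fvN
  | .allN i φ => φ.fvN.erase i
  | .exN i φ => φ.fvN.erase i
  | .allS _ _ φ => φ.fvN
  | .exS _ _ φ => φ.fvN

/-- Free set variables, as pairs (sort, index). -/
def fvS : SFm → Finset (ℕ × ℕ)
  | .bot => ∅
  | .eq _ _ => ∅
  | .mem k _ i => {(k, i)}
  | .and φ ψ => φ.fvS ∪ ψ.fvS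
  | .or φ ψ => φ.fvS ∪ ψ.fvS
  | .imp φ ψ => φ.fvS ∪ ψ.fvS
  | .allN _ φ => φ.fvS
  | .exN _ φ => φ.fvS
  | .allS k i φ => φ.fvS.erase (k, i)
  | .exS k i φ => φ.fvS.erase (k, i)

/-- Substitution of a numerical term for the numerical variable `i` (naive). -/
def substN : SFm → ℕ → NTm → SFm
  | .bot, _, _ => .bot
  | .eq t u, i, w => .eq (t.subst i w) (u.subst i w)
  | .mem k t j, i, w => .mem k (t.subst i w) j
  | .and φ ψ, i, w => .and (φ.substN i w) (ψ.substN i w)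
  | .or φ ψ, i, w => .or (φ.substN i w) (ψ.substN i w)
  | .imp φ ψ, i, w => .imp (φ.substN i w) (ψ.substN i w)
  | .allN j φ, i, w => if j = i then .allN j φ else .allN j (φ.substN i w)
  | .exN j φ, i, w => if j = i then .exN j φ else .exN j (φ.substN i w)
  | .allS k j φ, i, w => .allS k j (φ.substN i w)
  | .exS k j φ, i, w => .exS k j (φ.substN i w)

/-- The numerical term `w` is substitutable for the numerical variable `i`. -/
def freeForN (w : NTm) (i : ℕ) : SFm → Prop
  | .and φ ψ => φ.freeForN w i ∧ ψ.freeForN w i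
  | .or φ ψ => φ.freeForN w i ∧ ψ.freeForN w i
  | .imp φ ψ => φ.freeForN w i ∧ ψ.freeForN w i
  | .allN j φ => i ∉ (φ.fvN.erase j) ∨ (j ∉ w.fv ∧ φ.freeForN w i)
  | .exN j φ => i ∉ (φ.fvN.erase j) ∨ (j ∉ w.fv ∧ φ.freeForN w i)
  | .allS _ _ φ => φ.freeForN w i
  | .exS _ _ φ => φ.freeForN w i
  | _ => True

/-- Substitution of the set variable `x_j^{(k)}` for the set variable
`x_i^{(k)}` (naive). -/
def substS : SFm → ℕ → ℕ → ℕ → SFm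
  | .bot, _, _, _ => .bot
  | .eq t u, _, _, _ => .eq t u
  | .mem k' t i', k, i, j =>
      if k' = k ∧ i' = i then .mem k t j else .mem k' t i'
  | .and φ ψ, k, i, j => .and (φ.substS k i j) (ψ.substS k i j)
  | .or φ ψ, k, i, j => .or (φ.substS k i j) (ψ.substS k i j)
  | .imp φ ψ, k, i, j => .imp (φ.substS k i j) (ψ.substS k i j)
  | .allN n φ, k, i, j => .allN n (φ.substS k i j)
  | .exN n φ, k, i, j => .exN n (φ.substS k i j)
  | .allS k' i' φ, k, i, j =>
      if k' = k ∧ i' = i then .allS k' i' φ else .allS k' i' (φ.substS k i j)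
  | .exS k' i' φ, k, i, j =>
      if k' = k ∧ i' = i then .exS k' i' φ else .exS k' i' (φ.substS k i j)

/-- The set variable `x_j^{(k)}` is substitutable for `x_i^{(k)}`. -/
def freeForS (k i j : ℕ) : SFm → Prop
  | .and φ ψ => φ.freeForS k i j ∧ ψ.freeForS k i j
  | .or φ ψ => φ.freeForS k i j ∧ ψ.freeForS k i j
  | .imp φ ψ => φ.freeForS k i j ∧ ψ.freeForS k i j
  | .allN _ φ => φ.freeForS k i j
  | .exN _ φ => φ.freeForS k i j
  | .allS k' i' φ => (k, i) ∉ (φ.fvS.erase (k', i')) ∨ ((k', i') ≠ (k, j) ∧ φ.freeForS k i j)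
  | .exS k' i' φ => (k, i) ∉ (φ.fvS.erase (k', i')) ∨ ((k', i') ≠ (k, j) ∧ φ.freeForS k i j)
  | _ => True

/-- Capture-avoiding simultaneous substitution of numerical terms for the
numerical variables. -/
def msubN (σ : ℕ → NTm) : SFm → SFm
  | .bot => .bot
  | .eq t u => .eq (t.msubT σ) (u.msubT σ)
  | .mem k t i => .mem k (t.msubT σ) i
  | .and φ ψ => .and (φ.msubN σ) (ψ.msubN σ)
  | .or φ ψ => .or (φ.msubN σ) (ψ.msubN σ)
  | .imp φ ψ => .imp (φ.msubN σ) (ψ.msubN σ)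
  | .allN i φ =>
      let j := (φ.fvN.erase i).sup (fun v => (σ v).maxVar)
      .allN j (φ.msubN (Function.update σ i (.var j)))
  | .exN i φ =>
      let j := (φ.fvN.erase i).sup (fun v => (σ v).maxVar)
      .exN j (φ.msubN (Function.update σ i (.var j)))
  | .allS k i φ => .allS k i (φ.msubN σ)
  | .exS k i φ => .exS k i (φ.msubN σ)

/-- `φ` is `k`-simple: no quantifiers over set variables and no variables of
sorts greater than `k`. -/
def simple (k : ℕ) : SFm → Prop
  | .bot => True
  | .eq _ _ => True
  | .mem j _ _ => j ≤ k
  | .and φ ψ => φ.simple k ∧ ψ.simple k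
  | .or φ ψ => φ.simple k ∧ ψ.simple k
  | .imp φ ψ => φ.simple k ∧ ψ.simple k
  | .allN _ φ => φ.simple k
  | .exN _ φ => φ.simple k
  | .allS _ _ _ => False
  | .exS _ _ _ => False

/-- `φ` has no quantifiers over set variables. -/
def noSetQ : SFm → Prop
  | .and φ ψ => φ.noSetQ ∧ ψ.noSetQ
  | .or φ ψ => φ.noSetQ ∧ ψ.noSetQ
  | .imp φ ψ => φ.noSetQ ∧ ψ.noSetQ
  | .allN _ φ => φ.noSetQ
  | .exN _ φ => φ.noSetQ
  | .allS _ _ _ => False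
  | .exS _ _ _ => False
  | _ => True

/-- All sorts occurring in `φ` are `≤ s`. -/
def sortLE (s : ℕ∞) : SFm → Prop
  | .bot => True
  | .eq _ _ => True
  | .mem k _ _ => (k : ℕ∞) ≤ s
  | .and φ ψ => φ.sortLE s ∧ ψ.sortLE s
  | .or φ ψ => φ.sortLE s ∧ ψ.sortLE s
  | .imp φ ψ => φ.sortLE s ∧ ψ.sortLE s
  | .allN _ φ => φ.sortLE s
  | .exN _ φ => φ.sortLE s
  | .allS k _ φ => (k : ℕ∞) ≤ s ∧ φ.sortLE s
  | .exS k _ φ => (k : ℕ∞) ≤ s ∧ φ.sortLE s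

end SFm

/-- The formula `p = (n, m)` for the fixed (Cantor) numbering of pairs of
natural numbers: `2·p = (n+m)·(n+m+1) + 2·m`. -/
def pairEq (p n m : NTm) : SFm :=
  .eq (.add p p) (.add (.mul (.add n m) (.add (.add n m) .one)) (.add m m))

/-- The Cantor pairing function on ℕ (the fixed numbering of pairs). -/
def cpair (n m : ℕ) : ℕ := (n + m) * (n + m + 1) / 2 + m

/-- `(n,m) ∈_k x_y^{(k)}`, i.e. `∃p(p = (n,m) ∧ p ∈_k x_y^{(k)})`. -/
def pairMem (k : ℕ) (n m : NTm) (y : ℕ) (p : ℕ) : SFm :=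
  .exN p ((pairEq (.var p) n m).and (.mem k (.var p) y))

/-! ### Axioms and derivability for SA -/

/-- The non-logical axioms of SA: Peano axioms, induction for all formulas,
comprehension for `k`-simple formulas, and the axiom of choice for `k`-simple
formulas. -/
inductive SAx : SFm → Prop where
  | peano {α : AFm} : PeanoAx α → SAx α.toS
  | ind (φ : SFm) (i : ℕ) :
      SAx (((φ.substN i .zero).and
        (.allN i (φ.imp (φ.substN i (.add (.var i) .one))))).imp (.allN i φ))
  | compr (k z j : ℕ) (φ : SFm) (h : φ.simple k) (hz : (k, z) ∉ φ.fvS) :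
      SAx (.exS k z (.allN j ((SFm.mem k (.var j) z).iff φ)))
  | choice (k : ℕ) (φ : SFm) (n ix iz iy q m p : ℕ)
      (h : φ.simple k)
      (hiz : (k, iz) ∉ φ.fvS) (hizx : iz ≠ ix)
      (hq : q ∉ φ.fvN ∧ q ≠ n) (hm : m ∉ φ.fvN ∧ m ≠ n)
      (hp : p ∉ φ.fvN ∧ p ≠ n ∧ p ≠ m) :
      SAx ((SFm.allN n (.exS k ix (φ.and (.allS k iz ((φ.substS k ix iz).imp
              (.allN q ((SFm.mem k (.var q) ix).iff (.mem k (.var q) iz)))))))).imp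
           (.exS (k+1) iy (.allN n (.exS k ix (φ.and
              (.allN m ((SFm.mem k (.var m) ix).iff
                (pairMem (k+1) (.var n) (.var m) iy p))))))))

/-- Logical axioms for the (classical, many-sorted) language of SA:
propositional axioms, double-negation elimination, quantifier axioms for
numerical and for set quantifiers, and equality axioms. -/
inductive SLogAx : SFm → Prop where
  | pl1 (φ ψ : SFm) : SLogAx (φ.imp (ψ.imp φ))
  | pl2 (φ ψ χ : SFm) : SLogAx ((φ.imp (ψ.imp χ)).imp ((φ.imp ψ).imp (φ.imp χ)))
  | pl3 (φ ψ : SFm) : SLogAx (φ.imp (ψ.imp (φ.and ψ)))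
  | pl4 (φ ψ : SFm) : SLogAx ((φ.and ψ).imp φ)
  | pl5 (φ ψ : SFm) : SLogAx ((φ.and ψ).imp ψ)
  | pl6 (φ ψ : SFm) : SLogAx (φ.imp (φ.or ψ))
  | pl7 (φ ψ : SFm) : SLogAx (ψ.imp (φ.or ψ))
  | pl8 (φ ψ χ : SFm) : SLogAx ((φ.imp χ).imp ((ψ.imp χ).imp ((φ.or ψ).imp χ)))
  | pl9 (φ : SFm) : SLogAx (SFm.bot.imp φ)
  | em (φ : SFm) : SLogAx ((φ.neg.neg).imp φ)
  | qa1 (i : ℕ) (φ : SFm) (t : NTm) (hf : φ.freeForN t i) :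
      SLogAx ((SFm.allN i φ).imp (φ.substN i t))
  | qa2 (i : ℕ) (φ : SFm) (t : NTm) (hf : φ.freeForN t i) :
      SLogAx ((φ.substN i t).imp (.exN i φ))
  | qa3 (k i j : ℕ) (φ : SFm) (hf : φ.freeForS k i j) :
      SLogAx ((SFm.allS k i φ).imp (φ.substS k i j))
  | qa4 (k i j : ℕ) (φ : SFm) (hf : φ.freeForS k i j) :
      SLogAx ((φ.substS k i j).imp (.exS k i φ))
  | eqRefl (t : NTm) : SLogAx (.eq t t)
  | eqSubst (i : ℕ) (t u : NTm) (φ : SFm)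
      (h1 : φ.freeForN t i) (h2 : φ.freeForN u i) :
      SLogAx ((SFm.eq t u).imp ((φ.substN i t).imp (φ.substN i u)))

/-- Derivability over the language of SA from logical axioms and a set `ax` of
non-logical axioms, with the language restriction `L`. -/
inductive SProvG (L : SFm → Prop) (ax : SFm → Prop) : SFm → Prop where
  | axm {φ : SFm} : SLogAx φ → L φ → SProvG L ax φ
  | extra {φ : SFm} : ax φ → L φ → SProvG L ax φ
  | mp {φ ψ : SFm} : SProvG L ax (φ.imp ψ) → SProvG L ax φ → SProvG L ax ψ
  | allRN {ψ : SFm} {i : ℕ} {φ : SFm} : SProvG L ax (ψ.imp φ) → i ∉ ψ.fvN →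
      L (.allN i φ) → SProvG L ax (ψ.imp (.allN i φ))
  | exRN {ψ : SFm} {i : ℕ} {φ : SFm} : SProvG L ax (φ.imp ψ) → i ∉ ψ.fvN →
      L (.exN i φ) → SProvG L ax ((SFm.exN i φ).imp ψ)
  | allRS {ψ : SFm} {k i : ℕ} {φ : SFm} : SProvG L ax (ψ.imp φ) → (k, i) ∉ ψ.fvS →
      L (.allS k i φ) → SProvG L ax (ψ.imp (.allS k i φ))
  | exRS {ψ : SFm} {k i : ℕ} {φ : SFm} : SProvG L ax (φ.imp ψ) → (k, i) ∉ ψ.fvS →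
      L (.exS k i φ) → SProvG L ax ((SFm.exS k i φ).imp ψ)

/-- Derivability in (the fragment with sorts `≤ s` of) the multi-sorted
second-order arithmetic SA; `SAProv ⊤` is derivability in full SA, `SAProv s`
(for `s : ℕ`) is derivability in the fragment `SA_s` (`SA_0 = PA`). -/
def SAProv (s : ℕ∞) : SFm → Prop := SProvG (fun φ => φ.sortLE s) SAx

/-! ## The predicative second-order arithmetic Ar and its extensions

Ar has one sort of set variables; we render its formulas as the formulas of SA
in which all set variables and membership predicates have sort 1. -/

/-- The non-logical axioms of Ar: Peano axioms, induction for all formulas and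
comprehension for formulas without quantifiers over set variables. -/
inductive ArAx : SFm → Prop where
  | peano {α : AFm} : PeanoAx α → ArAx α.toS
  | ind (φ : SFm) (i : ℕ) :
      ArAx (((φ.substN i .zero).and
        (.allN i (φ.imp (φ.substN i (.add (.var i) .one))))).imp (.allN i φ))
  | compr (z j : ℕ) (φ : SFm) (h : φ.noSetQ) (hz : (1, z) ∉ φ.fvS) :
      ArAx (.exS 1 z (.allN j ((SFm.mem 1 (.var j) z).iff φ)))

/-- The unique-choice scheme (AC!):
`∀k∃!x φ(k,x) ⊃ ∃y∀k∃x[φ(k,x) ∧ ∀m(m ∈ x ≡ (k,m) ∈ y)]`,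
for `φ` without quantifiers over set variables and not containing `y`
(with `∃!x φ` expanded using the defined set equality `∀q(q∈x ≡ q∈z)`). -/
inductive ACBang : SFm → Prop where
  | intro (φ : SFm) (n ix iz iy q m p : ℕ)
      (h : φ.noSetQ)
      (hiz : (1, iz) ∉ φ.fvS) (hizx : iz ≠ ix)
      (hiy : (1, iy) ∉ φ.fvS) (hiyx : iy ≠ ix) (hiyz : iy ≠ iz)
      (hq : q ∉ φ.fvN ∧ q ≠ n) (hm : m ∉ φ.fvN ∧ m ≠ n)
      (hp : p ∉ φ.fvN ∧ p ≠ n ∧ p ≠ m) :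
      ACBang ((SFm.allN n (.exS 1 ix (φ.and (.allS 1 iz ((φ.substS 1 ix iz).imp
          (.allN q ((SFm.mem 1 (.var q) ix).iff (.mem 1 (.var q) iz)))))))).imp
        (.exS 1 iy (.allN n (.exS 1 ix (φ.and
          (.allN m ((SFm.mem 1 (.var m) ix).iff
            (pairMem 1 (.var n) (.var m) iy p))))))))

/-- The `Δ¹₁`-comprehension scheme (Δ¹₁-C):
`∀n[∀v φ(n,v) ≡ ∃u ψ(n,u)] ⊃ ∃z∀n[n ∈ z ≡ ∃u ψ(n,u)]`,
where `φ` and `ψ` have no quantifiers over set variables and do not contain `z`. -/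
inductive DeltaC : SFm → Prop where
  | intro (φ ψ : SFm) (n iv iu iz : ℕ)
      (hφ : φ.noSetQ) (hψ : ψ.noSetQ)
      (hz1 : (1, iz) ∉ φ.fvS) (hz2 : (1, iz) ∉ ψ.fvS)
      (hzu : iz ≠ iu) (hzv : iz ≠ iv) :
      DeltaC ((SFm.allN n ((SFm.allS 1 iv φ).iff (.exS 1 iu ψ))).imp
        (.exS 1 iz (.allN n ((SFm.mem 1 (.var n) iz).iff (.exS 1 iu ψ)))))

/-- Derivability in Ar extended by the scheme `extra` (over the one-sorted
language: all set sorts are `= 1`). -/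
def ArProv (extra : SFm → Prop) : SFm → Prop :=
  SProvG (fun φ => φ.sortLE 1) (fun φ => ArAx φ ∨ extra φ)

/-- The interpretation `φ ↦ φ^∧` of SA in Ar: all sorts are removed and the set
variable `x_i^{(k)}` is renamed into `x_{(k,i)}`. -/
def hatTr : SFm → SFm
  | .bot => .bot
  | .eq t u => .eq t u
  | .mem k t i => .mem 1 t (Nat.pair k i)
  | .and φ ψ => .and (hatTr φ) (hatTr ψ)
  | .or φ ψ => .or (hatTr φ) (hatTr ψ)
  | .imp φ ψ => .imp (hatTr φ) (hatTr ψ)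
  | .allN i φ => .allN i (hatTr φ)
  | .exN i φ => .exN i (hatTr φ)
  | .allS k i φ => .allS 1 (Nat.pair k i) (hatTr φ)
  | .exS k i φ => .exS 1 (Nat.pair k i) (hatTr φ)

/-!
The translation commutes with substitution, free variables and the side conditions of the
logical axioms and rules, because the renaming `(k, i) ↦ (1, (k, i))` of set variables is
injective. Hence it maps logical axioms to logical axioms and rule applications to rule
applications, and only the non-logical axioms need checking: Peano, induction and
comprehension axioms of SA become those of Ar, and the choice axiom for a `k`-simple `φ`
becomes an instance of (AC!), since the pairing keeps variables of different sorts apart and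
the set `y` of sort `k + 1` cannot occur in `φ`.
-/

theorem sortLE_hatTr (φ : SFm) : (hatTr φ).sortLE 1 := by
  induction φ <;> simp [hatTr, SFm.sortLE, *]

theorem fvN_hatTr (φ : SFm) : (hatTr φ).fvN = φ.fvN := by
  induction φ <;> simp [hatTr, SFm.fvN, *]

theorem mem_fvS_hatTr (k i : ℕ) (φ : SFm) :
    (1, Nat.pair k i) ∈ (hatTr φ).fvS ↔ (k, i) ∈ φ.fvS := by
  induction φ <;> simp [hatTr, SFm.fvS, Nat.pair_eq_pair, *]

theorem noSetQ_hatTr (φ : SFm) : (hatTr φ).noSetQ ↔ φ.noSetQ := by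
  induction φ <;> simp [hatTr, SFm.noSetQ, *]

theorem hatTr_toS (α : AFm) : hatTr α.toS = α.toS := by
  induction α <;> simp [AFm.toS, hatTr, *]

theorem hatTr_substN (φ : SFm) (i : ℕ) (t : NTm) :
    hatTr (φ.substN i t) = (hatTr φ).substN i t := by
  induction φ <;> simp [hatTr, SFm.substN, apply_ite hatTr, *]

theorem hatTr_substS (φ : SFm) (k i j : ℕ) :
    hatTr (φ.substS k i j) = (hatTr φ).substS 1 (Nat.pair k i) (Nat.pair k j) := by
  induction φ <;> simp [hatTr, SFm.substS, apply_ite hatTr, Nat.pair_eq_pair, *]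

theorem freeForN_hatTr (t : NTm) (i : ℕ) (φ : SFm) :
    (hatTr φ).freeForN t i ↔ φ.freeForN t i := by
  induction φ <;> simp [hatTr, SFm.freeForN, fvN_hatTr, *]

theorem freeForS_hatTr (k i j : ℕ) (φ : SFm) :
    (hatTr φ).freeForS 1 (Nat.pair k i) (Nat.pair k j) ↔ φ.freeForS k i j := by
  induction φ <;>
    simp [hatTr, SFm.freeForS, mem_fvS_hatTr, Nat.pair_eq_pair, Prod.ext_iff, *]

theorem SFm.simple.noSetQ {φ : SFm} {k : ℕ} (h : φ.simple k) : φ.noSetQ := by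
  induction φ <;> simp_all [SFm.simple, SFm.noSetQ]

theorem SFm.simple.fst_le_of_mem_fvS {φ : SFm} {k : ℕ} (h : φ.simple k) {p : ℕ × ℕ}
    (hp : p ∈ φ.fvS) : p.1 ≤ k := by
  induction φ <;> simp_all [SFm.simple, SFm.fvS] <;> aesop

theorem hatTr_SLogAx {φ : SFm} (h : SLogAx φ) : SLogAx (hatTr φ) := by
  cases h with
  | qa1 i φ t hf =>
      simpa only [hatTr, hatTr_substN] using
        SLogAx.qa1 i (hatTr φ) t ((freeForN_hatTr t i φ).mpr hf)
  | qa2 i φ t hf =>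
      simpa only [hatTr, hatTr_substN] using
        SLogAx.qa2 i (hatTr φ) t ((freeForN_hatTr t i φ).mpr hf)
  | qa3 k i j φ hf =>
      simpa only [hatTr, hatTr_substS] using
        SLogAx.qa3 1 _ _ (hatTr φ) ((freeForS_hatTr k i j φ).mpr hf)
  | qa4 k i j φ hf =>
      simpa only [hatTr, hatTr_substS] using
        SLogAx.qa4 1 _ _ (hatTr φ) ((freeForS_hatTr k i j φ).mpr hf)
  | eqSubst i t u φ h₁ h₂ =>
      simpa only [hatTr, hatTr_substN] using
        SLogAx.eqSubst i t u (hatTr φ) ((freeForN_hatTr t i φ).mpr h₁)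
          ((freeForN_hatTr u i φ).mpr h₂)
  | _ => constructor

theorem hatTr_SAx {φ : SFm} (h : SAx φ) : ArAx (hatTr φ) ∨ ACBang (hatTr φ) := by
  cases h with
  | peano h => exact .inl (by rw [hatTr_toS]; exact .peano h)
  | ind φ i => exact .inl (by simpa only [hatTr, hatTr_substN] using ArAx.ind (hatTr φ) i)
  | compr k z j φ hs hz =>
      left
      simpa only [hatTr, SFm.iff] using ArAx.compr (Nat.pair k z) j (hatTr φ)
        ((noSetQ_hatTr φ).mpr hs.noSetQ) ((mem_fvS_hatTr k z φ).not.mpr hz)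
  | choice k φ n ix iz iy q m p hs hiz hizx hq hm hp =>
      right
      have hiy : (k + 1, iy) ∉ φ.fvS := fun hy => by simpa using hs.fst_le_of_mem_fvS hy
      simpa only [hatTr, SFm.iff, hatTr_substS, pairMem, pairEq] using
        ACBang.intro (hatTr φ) n (Nat.pair k ix) (Nat.pair k iz) (Nat.pair (k + 1) iy) q m p
          ((noSetQ_hatTr φ).mpr hs.noSetQ) ((mem_fvS_hatTr k iz φ).not.mpr hiz)
          (by simpa [Nat.pair_eq_pair] using hizx) ((mem_fvS_hatTr _ _ φ).not.mpr hiy)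
          (by simp [Nat.pair_eq_pair]) (by simp [Nat.pair_eq_pair])
          (fvN_hatTr φ ▸ hq) (fvN_hatTr φ ▸ hm) (fvN_hatTr φ ▸ hp)

theorem SProvG.map_hatTr {L L' ax ax' : SFm → Prop} (hL' : ∀ φ, L' (hatTr φ))
    (hax : ∀ φ, ax φ → SProvG L' ax' (hatTr φ)) {φ : SFm} (h : SProvG L ax φ) :
    SProvG L' ax' (hatTr φ) := by
  induction h with
  | axm hφ _ => exact .axm (hatTr_SLogAx hφ) (hL' _)
  | extra hφ _ => exact hax _ hφ
  | mp _ _ ih₁ ih₂ => exact .mp ih₁ ih₂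
  | allRN _ hi _ ih => exact .allRN ih (by rwa [fvN_hatTr]) (hL' (.allN _ _))
  | exRN _ hi _ ih => exact .exRN ih (by rwa [fvN_hatTr]) (hL' (.exN _ _))
  | allRS _ hi _ ih => exact .allRS ih ((mem_fvS_hatTr _ _ _).not.mpr hi) (hL' (.allS _ _ _))
  | exRS _ hi _ ih => exact .exRS ih ((mem_fvS_hatTr _ _ _).not.mpr hi) (hL' (.exS _ _ _))

/-- **Theorem 6.1 of the paper**: the multi-sorted second-order arithmetic SA is
interpretable in `Ar + (AC!)` via the translation `φ ↦ φ^∧` that erases sorts and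
renames the set variable `x_i^{(k)}` into `x_{(k,i)}`: every theorem of SA is
mapped to a theorem of `Ar + (AC!)`. -/
theorem SA_interpretable_in_Ar_ACBang :
    ∀ φ : SFm, SAProv ⊤ φ → ArProv ACBang (hatTr φ) := by
  intro φ h
  exact h.map_hatTr sortLE_hatTr fun ψ hψ => .extra (hatTr_SAx hψ) (sortLE_hatTr ψ)

end ArXiv150408062
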